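/- arXiv:1712.01540 — 5 statements merged into one kernel-verified Lean document; each statement's English description precedes it below -/
import Mathlib

section
/- Let X be a Banach space, S a closed subset of X, and x₀ ∈ S. If D is a sequence uniform tangent set to S at x₀ (for each ε > 0 there exists δ > 0 such that for each v ∈ D and each x ∈ S ∩ (x₀ + δ·closedBall), there is a sequence of positive reals tₘ → 0 with S ∩ (x + tₘ(v + ε·closedBall)) nonempty for all m), then D is a uniform tangent set to S at x₀ in the strong sense: for each ε > 0 there exist δ > 0 and λ > 0 such that for each v ∈ D and each x ∈ S ∩ (x₀ + δ·closedBall), the set S ∩ (x + t(v + ε·closedBall)) is nonempty for every t ∈ [0, λ]. -/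
open Metric Filter Set Topology

/-!
Order pairs `(y, s) ∈ S × [0, t]` by `(y, s) ≼ (y', s')` iff `y' ∈ y + (s' - s)(v + ε B̄)`
(`ConeLE`). Along a chain `y` is `(‖v‖ + ε)`-Lipschitz in `s`, so, `X` being complete and `S`
closed, every chain has an upper bound, and the Brezis–Browder ordering principle gives a point
`(y, s) ≽ (x, 0)` above which `s` cannot increase. For small `t` every point `≽ (x, 0)` stays
within `δ` of `x₀`, where the sequential hypothesis provides arbitrarily short steps; hence the
maximal point has `s = t`, i.e. `y ∈ S ∩ (x + t(v + ε B̄))`.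
-/

theorem brezis_browder {α : Type*} {r : α → α → Prop} (hrefl : ∀ a, r a a)
    (htrans : ∀ ⦃a b c⦄, r a b → r b c → r a c) {φ : α → ℝ} (hφ : ∀ ⦃a b⦄, r a b → φ a ≤ φ b)
    (hbdd : BddAbove (range φ))
    (hseq : ∀ u : ℕ → α, (∀ n, r (u n) (u (n + 1))) → ∃ b, ∀ n, r (u n) b) (a : α) :
    ∃ b, r a b ∧ ∀ c, r b c → φ c ≤ φ b := by
  let g : α → ℝ := fun a => sSup (φ '' {c | r a c})
  have le_g : ∀ ⦃a c⦄, r a c → φ c ≤ g a := fun a c h =>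
    le_csSup (hbdd.mono (image_subset_range _ _)) (mem_image_of_mem _ h)
  have almost_sup : ∀ (n : ℕ) a, ∃ b, r a b ∧ g a - 1 / (n + 1) < φ b := by
    intro n a
    obtain ⟨_, ⟨b, hab, rfl⟩, hb⟩ := exists_lt_of_lt_csSup
      ((nonempty_of_mem (hrefl a)).image φ) (sub_lt_self (g a) (Nat.one_div_pos_of_nat))
    exact ⟨b, hab, hb⟩
  choose next r_next lt_next using almost_sup
  let u : ℕ → α := fun n => Nat.rec a (fun n b => next n b) n
  obtain ⟨b, hb⟩ := hseq u fun n => r_next n (u n)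
  refine ⟨b, hb 0, fun c hbc => le_of_forall_pos_lt_add fun δ hδ => ?_⟩
  obtain ⟨n, hn⟩ := exists_nat_one_div_lt hδ
  calc φ c ≤ g (u n) := le_g (htrans (hb n) hbc)
    _ < φ (u (n + 1)) + 1 / (n + 1) := by linarith [lt_next n (u n)]
    _ ≤ φ b + δ := add_le_add (hφ (hb (n + 1))) hn.le

section ConeLE

variable {X : Type*} [NormedAddCommGroup X] [NormedSpace ℝ X] {v : X} {ε : ℝ}

def ConeLE (v : X) (ε : ℝ) (p q : X × ℝ) : Prop :=
  p.2 ≤ q.2 ∧ ‖q.1 - p.1 - (q.2 - p.2) • v‖ ≤ ε * (q.2 - p.2)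

theorem ConeLE.refl (p : X × ℝ) : ConeLE v ε p p := by
  simp [ConeLE]

theorem ConeLE.trans {p q r : X × ℝ} (hpq : ConeLE v ε p q) (hqr : ConeLE v ε q r) :
    ConeLE v ε p r := by
  refine ⟨hpq.1.trans hqr.1, ?_⟩
  calc ‖r.1 - p.1 - (r.2 - p.2) • v‖
      = ‖(r.1 - q.1 - (r.2 - q.2) • v) + (q.1 - p.1 - (q.2 - p.2) • v)‖ := by
        congr 1; rw [← sub_add_sub_cancel r.2 q.2 p.2, add_smul]; abel
    _ ≤ ε * (r.2 - q.2) + ε * (q.2 - p.2) := (norm_add_le _ _).trans (add_le_add hqr.2 hpq.2)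
    _ = ε * (r.2 - p.2) := by ring

theorem ConeLE.norm_sub_le {p q : X × ℝ} (h : ConeLE v ε p q) :
    ‖q.1 - p.1‖ ≤ (‖v‖ + ε) * (q.2 - p.2) := by
  have hs : 0 ≤ q.2 - p.2 := sub_nonneg.2 h.1
  calc ‖q.1 - p.1‖ = ‖(q.1 - p.1 - (q.2 - p.2) • v) + (q.2 - p.2) • v‖ := by
        rw [sub_add_cancel]
    _ ≤ ε * (q.2 - p.2) + (q.2 - p.2) * ‖v‖ := by
        grw [norm_add_le, h.2, norm_smul, Real.norm_of_nonneg hs]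
    _ = (‖v‖ + ε) * (q.2 - p.2) := by ring

theorem coneLE_iff {τ : ℝ} (hε : 0 < ε) (hτ : 0 < τ) {p : X × ℝ} {y : X} :
    ConeLE v ε p (y, p.2 + τ) ↔ ∃ b : X, ‖b‖ ≤ 1 ∧ y = p.1 + τ • (v + ε • b) := by
  simp only [ConeLE, add_sub_cancel_left, le_add_iff_nonneg_right, hτ.le, true_and]
  constructor
  · intro h
    refine ⟨(ε * τ)⁻¹ • (y - p.1 - τ • v), ?_, ?_⟩
    · rw [norm_smul, Real.norm_of_nonneg (by positivity)]
      exact inv_mul_le_one_of_le₀ h (by positivity)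
    · have hcancel : τ * ε * (ε * τ)⁻¹ = 1 := by field_simp
      rw [smul_add, smul_smul, smul_smul, hcancel, one_smul]
      abel
  · rintro ⟨b, hb, rfl⟩
    calc ‖p.1 + τ • (v + ε • b) - p.1 - τ • v‖ = τ * ε * ‖b‖ := by
          rw [smul_add, smul_smul, add_sub_cancel_left, add_sub_cancel_left, norm_smul,
            Real.norm_of_nonneg (by positivity)]
      _ ≤ ε * τ := by nlinarith [mul_pos hτ hε]

theorem isClosed_setOf_coneLE (p : X × ℝ) : IsClosed {q | ConeLE v ε p q} :=
  (isClosed_le continuous_const continuous_snd).inter <|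
    isClosed_le (f := fun q : X × ℝ => ‖q.1 - p.1 - (q.2 - p.2) • v‖) (by fun_prop) (by fun_prop)

theorem ConeLE.of_succ {u : ℕ → X × ℝ} (hu : ∀ n, ConeLE v ε (u n) (u (n + 1))) {n m : ℕ}
    (hnm : n ≤ m) : ConeLE v ε (u n) (u m) := by
  induction m, hnm using Nat.le_induction with
  | base => exact .refl _
  | succ m _ ih => exact ih.trans (hu m)

theorem exists_tendsto_coneLE [CompleteSpace X] (hε : 0 ≤ ε) {u : ℕ → X × ℝ}
    (hu : ∀ n, ConeLE v ε (u n) (u (n + 1))) (hbdd : BddAbove (range fun n => (u n).2)) :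
    ∃ q, Tendsto u atTop (𝓝 q) ∧ ∀ n, ConeLE v ε (u n) q := by
  obtain ⟨B, hB⟩ := hbdd
  have hK : 0 ≤ ‖v‖ + ε + 1 := by positivity
  have hdist : ∀ n, dist (u n) (u (n + 1)) ≤ (‖v‖ + ε + 1) * ((u (n + 1)).2 - (u n).2) := by
    intro n
    have hs : 0 ≤ (u (n + 1)).2 - (u n).2 := sub_nonneg.2 (hu n).1
    rw [Prod.dist_eq, dist_comm, dist_eq_norm, Real.dist_eq, abs_sub_comm, abs_of_nonneg hs]
    exact max_le ((hu n).norm_sub_le.trans (by nlinarith)) (by nlinarith [norm_nonneg v])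
  have hsum : Summable fun n => (‖v‖ + ε + 1) * ((u (n + 1)).2 - (u n).2) := by
    refine summable_of_sum_range_le (c := (‖v‖ + ε + 1) * (B - (u 0).2))
      (fun n => mul_nonneg hK (sub_nonneg.2 (hu n).1)) fun n => ?_
    rw [← Finset.mul_sum, Finset.sum_range_sub fun i => (u i).2]
    exact mul_le_mul_of_nonneg_left (sub_le_sub_right (hB ⟨n, rfl⟩) _) hK
  obtain ⟨q, hq⟩ := cauchySeq_tendsto_of_complete (cauchySeq_of_dist_le_of_summable _ hdist hsum)
  refine ⟨q, hq, fun n => (isClosed_setOf_coneLE _).mem_of_tendsto hq ?_⟩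
  filter_upwards [eventually_ge_atTop n] with m hm using ConeLE.of_succ hu hm

end ConeLE

theorem exists_add_smul_mem_of_forall_exists_step {X : Type*} [NormedAddCommGroup X]
    [NormedSpace ℝ X] [CompleteSpace X] {S : Set X} (hS : IsClosed S) {v x : X} {ε t : ℝ}
    (hε : 0 < ε) (ht : 0 < t) (hx : x ∈ S)
    (hstep : ∀ y ∈ S, ∀ s ∈ Ico 0 t, ‖y - x - s • v‖ ≤ ε * s →
      ∃ τ ∈ Ioc 0 (t - s), ∃ b : X, ‖b‖ ≤ 1 ∧ y + τ • (v + ε • b) ∈ S) :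
    ∃ b : X, ‖b‖ ≤ 1 ∧ x + t • (v + ε • b) ∈ S := by
  let P : Set (X × ℝ) := {p | p.1 ∈ S ∧ p.2 ≤ t}
  have hP : IsClosed P :=
    (hS.preimage continuous_fst).inter (isClosed_le continuous_snd continuous_const)
  have chain_bounded (u : ℕ → P) (hu : ∀ n, ConeLE v ε (u n) (u (n + 1))) :
      ∃ b : P, ∀ n, ConeLE v ε (u n) b := by
    obtain ⟨q, hq, hle⟩ := exists_tendsto_coneLE hε.le hu
      ⟨t, by rintro _ ⟨n, rfl⟩; exact (u n).2.2⟩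
    exact ⟨⟨q, hP.mem_of_tendsto hq (.of_forall fun n => (u n).2)⟩, hle⟩
  obtain ⟨⟨q, hqS, hqt⟩, hxq, hmax⟩ := brezis_browder (r := fun a b : P => ConeLE v ε a b)
    (fun _ => .refl _) (fun _ _ _ => .trans) (φ := fun a => a.1.2) (fun _ _ h => h.1)
    ⟨t, by rintro _ ⟨a, rfl⟩; exact a.2.2⟩ chain_bounded ⟨(x, 0), hx, ht.le⟩
  have hq_eq : q.2 = t := by
    by_contra hne
    obtain ⟨τ, ⟨hτ, hτt⟩, b, hb, hmem⟩ :=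
      hstep q.1 hqS q.2 ⟨hxq.1, hqt.lt_of_ne hne⟩ (by simpa [ConeLE] using hxq.2)
    have := hmax ⟨(_, q.2 + τ), hmem, by linarith⟩ ((coneLE_iff hε hτ).2 ⟨b, hb, rfl⟩)
    linarith
  obtain ⟨b, hb, hq⟩ := (coneLE_iff (p := (x, 0)) hε ht).1 (by simpa [← hq_eq] using hxq)
  exact ⟨b, hb, hq ▸ hqS⟩

theorem sequence_uts_implies_strong_uts_general
    {X : Type*} [NormedAddCommGroup X] [NormedSpace ℝ X] [CompleteSpace X]
    (S : Set X) (hS : IsClosed S) (x₀ : X)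
    (D : Set X) (hD : Bornology.IsBounded D)
    (h : ∀ ε > (0:ℝ), ∃ δ > (0:ℝ), ∀ v ∈ D, ∀ x ∈ S, ‖x - x₀‖ ≤ δ →
      ∃ t : ℕ → ℝ, (∀ m, 0 < t m) ∧ Tendsto t atTop (nhds 0) ∧
        ∀ m, ∃ b : X, ‖b‖ ≤ 1 ∧ x + t m • (v + ε • b) ∈ S) :
    ∀ ε > (0:ℝ), ∃ δ > (0:ℝ), ∃ lam > (0:ℝ), ∀ v ∈ D, ∀ x ∈ S, ‖x - x₀‖ ≤ δ →
      ∀ t ∈ Set.Icc (0:ℝ) lam, ∃ b : X, ‖b‖ ≤ 1 ∧ x + t • (v + ε • b) ∈ S := by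
  intro ε hε
  obtain ⟨δ, hδ, hseq⟩ := h ε hε
  obtain ⟨M, hM, hDM⟩ := hD.exists_pos_norm_le
  refine ⟨δ / 2, by positivity, δ / (2 * (M + ε)), by positivity, fun v hv x hx hxx₀ t ht => ?_⟩
  rcases ht.1.eq_or_lt with rfl | htpos
  · exact ⟨0, by simp, by simpa using hx⟩
  refine exists_add_smul_mem_of_forall_exists_step hS hε htpos hx fun y hy s hs hys => ?_
  have hsδ : s * (M + ε) ≤ δ / 2 := by
    have := (le_div_iff₀ (by positivity)).1 (hs.2.le.trans ht.2)
    nlinarith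
  have hyx₀ : ‖y - x₀‖ ≤ δ :=
    calc ‖y - x₀‖ = ‖(y - x - s • v) + s • v + (x - x₀)‖ := by congr 1; abel
      _ ≤ ε * s + s * M + δ / 2 := by
        grw [norm_add₃_le, hys, norm_smul, Real.norm_of_nonneg hs.1, hDM v hv, hxx₀]
        exact hs.1
      _ ≤ δ := by linarith
  obtain ⟨τ, hτpos, hτlim, hτS⟩ := hseq v hv y hy hyx₀
  obtain ⟨m, hm⟩ := (hτlim.eventually_lt_const (sub_pos.2 hs.2)).exists
  exact ⟨τ m, ⟨hτpos m, hm.le⟩, hτS m⟩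

/-- If `D` is a sequence uniform tangent set to `S` at `x₀`, then `D` is a uniform
tangent set in the strong (λ-uniform) sense. -/
theorem sequence_uts_implies_strong_uts
    {X : Type*} [NormedAddCommGroup X] [NormedSpace ℝ X] [CompleteSpace X]
    (S : Set X) (hS : IsClosed S) (x₀ : X) (hx₀ : x₀ ∈ S)
    (D : Set X) (hD : Bornology.IsBounded D)
    (h : ∀ ε > (0:ℝ), ∃ δ > (0:ℝ), ∀ v ∈ D, ∀ x ∈ S, ‖x - x₀‖ ≤ δ →
      ∃ t : ℕ → ℝ, (∀ m, 0 < t m) ∧ Tendsto t atTop (nhds 0) ∧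
        ∀ m, ∃ b : X, ‖b‖ ≤ 1 ∧ x + t m • (v + ε • b) ∈ S) :
    ∀ ε > (0:ℝ), ∃ δ > (0:ℝ), ∃ lam > (0:ℝ), ∀ v ∈ D, ∀ x ∈ S, ‖x - x₀‖ ≤ δ →
      ∀ t ∈ Set.Icc (0:ℝ) lam, ∃ b : X, ‖b‖ ≤ 1 ∧ x + t • (v + ε • b) ∈ S :=
  sequence_uts_implies_strong_uts_general S hS x₀ D hD h
end

section
/- Let X be a Banach space, S a closed subset of X, x₀ ∈ S, and let D be a sequence uniform tangent set to S at x₀. Then the convex hull of D is again a sequence uniform tangent set to S at x₀. -/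
/-!
Uniform tangency of `D` provides, from every point of `S` near `x₀`, arbitrarily short steps along
each `z ∈ D` that stay `ε`-close to `S`. A Zorn argument on time–position pairs (a
Brezis–Browder maximality principle; closedness of `S` and completeness of `X` make chains bounded)
turns these into steps of any prescribed length `η` with error `ε η`. For
`v = ∑ wᵢ zᵢ ∈ convexHull D`, concatenating exact steps along `zᵢ` of length `t wᵢ` lands within
`ε t` of `x + t v`, and boundedness of `D` keeps the whole path near `x₀` for all `t` below a
threshold that does not depend on `v`.
-/

open Filter Set Topology

section

variable {X : Type*} [NormedAddCommGroup X] [NormedSpace ℝ X]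

/-- On pairs `(time, position)`: `q` is reached from `p` by moving along `v`, with error at most
`ε` per unit of time. -/
def FollowsAlong (v : X) (ε : ℝ) (p q : ℝ × X) : Prop :=
  p.1 ≤ q.1 ∧ ‖q.2 - p.2 - (q.1 - p.1) • v‖ ≤ ε * (q.1 - p.1)

namespace FollowsAlong

variable {v : X} {ε : ℝ} {p q r : ℝ × X}

theorem refl (v : X) (ε : ℝ) (p : ℝ × X) : FollowsAlong v ε p p :=
  ⟨le_rfl, by simp⟩

instance : Std.Refl (FollowsAlong v ε) :=
  ⟨refl v ε⟩

theorem trans (hpq : FollowsAlong v ε p q) (hqr : FollowsAlong v ε q r) :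
    FollowsAlong v ε p r := by
  refine ⟨hpq.1.trans hqr.1, ?_⟩
  calc ‖r.2 - p.2 - (r.1 - p.1) • v‖
      = ‖(r.2 - q.2 - (r.1 - q.1) • v) + (q.2 - p.2 - (q.1 - p.1) • v)‖ := by
        congr 1; module
    _ ≤ ε * (r.1 - q.1) + ε * (q.1 - p.1) := norm_add_le_of_le hqr.2 hpq.2
    _ = ε * (r.1 - p.1) := by ring

theorem norm_sub_le (h : FollowsAlong v ε p q) : ‖q.2 - p.2‖ ≤ (‖v‖ + ε) * (q.1 - p.1) :=
  calc ‖q.2 - p.2‖ = ‖(q.2 - p.2 - (q.1 - p.1) • v) + (q.1 - p.1) • v‖ := by rw [sub_add_cancel]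
    _ ≤ ε * (q.1 - p.1) + (q.1 - p.1) * ‖v‖ := by
      refine norm_add_le_of_le h.2 ?_
      rw [norm_smul, Real.norm_of_nonneg (sub_nonneg.2 h.1)]
    _ = (‖v‖ + ε) * (q.1 - p.1) := by ring

theorem norm_sub_sub_smul_le_abs (h : FollowsAlong v ε p q ∨ FollowsAlong v ε q p) :
    ‖q.2 - p.2 - (q.1 - p.1) • v‖ ≤ ε * |q.1 - p.1| := by
  rcases h with h | h
  · rw [abs_of_nonneg (sub_nonneg.2 h.1)]
    exact h.2
  · rw [abs_sub_comm, abs_of_nonneg (sub_nonneg.2 h.1),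
      show q.2 - p.2 - (q.1 - p.1) • v = -(p.2 - q.2 - (p.1 - q.1) • v) by module, norm_neg]
    exact h.2

theorem dist_le_abs (h : FollowsAlong v ε p q ∨ FollowsAlong v ε q p) :
    dist p.2 q.2 ≤ (‖v‖ + ε) * |q.1 - p.1| := by
  rcases h with h | h
  · rw [dist_comm, dist_eq_norm, abs_of_nonneg (sub_nonneg.2 h.1)]
    exact h.norm_sub_le
  · rw [dist_eq_norm, abs_sub_comm, abs_of_nonneg (sub_nonneg.2 h.1)]
    exact h.norm_sub_le

end FollowsAlong

theorem IsChain.exists_followsAlong_sSup [CompleteSpace X] {v : X} {ε : ℝ} (hε : 0 ≤ ε)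
    {c : Set (ℝ × X)} (hc : IsChain (FollowsAlong v ε) c) (hne : c.Nonempty)
    (hbdd : BddAbove (Prod.fst '' c)) :
    ∃ p : ℝ × X, p.1 = sSup (Prod.fst '' c) ∧ p.2 ∈ closure (Prod.snd '' c) ∧
      ∀ a ∈ c, FollowsAlong v ε a p := by
  set σ := sSup (Prod.fst '' c)
  have hσ : ∀ b ∈ c, b.1 ≤ σ := fun b hb => le_csSup hbdd (mem_image_of_mem _ hb)
  obtain ⟨s, hs_mono, hs_lim, hs_mem⟩ := exists_seq_tendsto_sSup (hne.image Prod.fst) hbdd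
  choose a ha has using hs_mem
  have ha_lim : Tendsto (fun n => (a n).1) atTop (𝓝 σ) := by simpa only [has] using hs_lim
  have hcauchy : CauchySeq fun n => (a n).2 := by
    refine cauchySeq_of_le_tendsto_0' (fun n => (‖v‖ + ε) * (σ - s n)) (fun n m hnm => ?_) ?_
    · calc dist (a n).2 (a m).2 ≤ (‖v‖ + ε) * |(a m).1 - (a n).1| :=
            FollowsAlong.dist_le_abs (hc.total (ha n) (ha m))
        _ ≤ (‖v‖ + ε) * (σ - s n) := by
            rw [has, has, abs_of_nonneg (sub_nonneg.2 (hs_mono hnm))]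
            gcongr
            exact has m ▸ hσ _ (ha m)
    · simpa [σ] using (hs_lim.const_sub σ).const_mul (‖v‖ + ε)
  obtain ⟨y, hy⟩ := cauchySeq_tendsto_of_complete hcauchy
  refine ⟨(σ, y), rfl, mem_closure_of_tendsto hy (.of_forall fun n => mem_image_of_mem _ (ha n)),
    fun b hb => ⟨hσ b hb, ?_⟩⟩
  have := le_of_tendsto_of_tendsto'
    ((hy.sub_const b.2).sub ((ha_lim.sub_const b.1).smul_const v)).norm
    ((ha_lim.sub_const b.1).abs.const_mul ε)
    fun n => FollowsAlong.norm_sub_sub_smul_le_abs (hc.total hb (ha n))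
  rwa [abs_of_nonneg (sub_nonneg.2 (hσ b hb))] at this

variable (S : Set X) (x₀ : X) (δ ε : ℝ) (v : X)

def SmallStepTangent : Prop :=
  ∀ y ∈ S, ‖y - x₀‖ ≤ δ → ∀ θ > 0, ∃ t ∈ Ioo 0 θ, ∃ y' ∈ S, ‖y' - (y + t • v)‖ ≤ ε * t

/-- The condition on `η` keeps the whole step, which moves the point by at most `η * (‖v‖ + ε)`,
inside the ball of radius `δ` around `x₀`. -/
def ExactStepTangent : Prop :=
  ∀ x ∈ S, ∀ η, 0 ≤ η → ‖x - x₀‖ + η * (‖v‖ + ε) ≤ δ → ∃ y ∈ S, ‖y - (x + η • v)‖ ≤ ε * η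

variable {S x₀ δ ε v}

theorem norm_sub_add_smul_le_mul_iff {x y : X} {t : ℝ} (hε : 0 < ε) (ht : 0 < t) :
    ‖y - (x + t • v)‖ ≤ ε * t ↔ ∃ b : X, ‖b‖ ≤ 1 ∧ y = x + t • (v + ε • b) := by
  constructor
  · intro h
    refine ⟨(ε * t)⁻¹ • (y - (x + t • v)), ?_, ?_⟩
    · rw [norm_smul, norm_inv, Real.norm_of_nonneg (by positivity)]
      exact inv_mul_le_one_of_le₀ h (by positivity)
    · rw [smul_add, smul_smul, smul_smul, show t * ε * (ε * t)⁻¹ = 1 by field_simp, one_smul]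
      abel
  · rintro ⟨b, hb, rfl⟩
    rw [show x + t • (v + ε • b) - (x + t • v) = (t * ε) • b by module, norm_smul,
      Real.norm_of_nonneg (by positivity), mul_comm t]
    exact mul_le_of_le_one_right (by positivity) hb

theorem smallStepTangent_of_seq (hε : 0 < ε)
    (h : ∀ y ∈ S, ‖y - x₀‖ ≤ δ → ∃ t : ℕ → ℝ, (∀ m, 0 < t m) ∧ Tendsto t atTop (𝓝 0) ∧
      ∀ m, ∃ b : X, ‖b‖ ≤ 1 ∧ y + t m • (v + ε • b) ∈ S) :
    SmallStepTangent S x₀ δ ε v := by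
  intro y hy hyd θ hθ
  obtain ⟨t, ht, hlim, hstep⟩ := h y hy hyd
  obtain ⟨m, hm⟩ := (hlim.eventually (gt_mem_nhds hθ)).exists
  obtain ⟨b, hb, hbS⟩ := hstep m
  exact ⟨t m, ⟨ht m, hm⟩, _, hbS, (norm_sub_add_smul_le_mul_iff hε (ht m)).2 ⟨b, hb, rfl⟩⟩

theorem SmallStepTangent.exactStepTangent [CompleteSpace X] (hS : IsClosed S) (hε : 0 ≤ ε)
    (h : SmallStepTangent S x₀ δ ε v) : ExactStepTangent S x₀ δ ε v := by
  intro x hx η hη hbudget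
  let Valid (p : ℝ × X) : Prop := p.1 ≤ η ∧ p.2 ∈ S ∧ FollowsAlong v ε (0, x) p
  have hstart : Valid (0, x) := ⟨hη, hx, .refl _ _ _⟩
  have hchain (c : Set {p // Valid p}) (hc : IsChain (fun a b => FollowsAlong v ε a.1 b.1) c) :
      ∃ ub : {p // Valid p}, ∀ a ∈ c, FollowsAlong v ε a.1 ub.1 := by
    rcases c.eq_empty_or_nonempty with rfl | ⟨a₀, ha₀⟩
    · exact ⟨⟨_, hstart⟩, by simp⟩
    have hbdd : ∀ r ∈ Prod.fst '' (Subtype.val '' c), r ≤ η := by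
      rintro _ ⟨_, ⟨a, -, rfl⟩, rfl⟩
      exact a.2.1
    obtain ⟨p, hp₁, hp₂, hub⟩ :=
      (hc.image_of_map_rel _ _ Subtype.val fun _ _ h => h).exists_followsAlong_sSup hε
        ⟨_, mem_image_of_mem _ ha₀⟩ ⟨η, hbdd⟩
    refine ⟨⟨p, ?_, ?_, a₀.2.2.2.trans (hub _ (mem_image_of_mem _ ha₀))⟩,
      fun a ha => hub _ (mem_image_of_mem _ ha)⟩
    · exact hp₁ ▸ csSup_le ⟨_, mem_image_of_mem _ (mem_image_of_mem _ ha₀)⟩ hbdd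
    · refine hS.closure_subset_iff.2 ?_ hp₂
      rintro _ ⟨_, ⟨a, -, rfl⟩, rfl⟩
      exact a.2.2.1
  obtain ⟨⟨m, hmη, hmS, hxm⟩, hmax⟩ := exists_maximal_of_chains_bounded
    (r := fun a b : {p // Valid p} => FollowsAlong v ε a.1 b.1) hchain (fun hab hbc => hab.trans hbc)
  obtain hm_eq | hm_lt := hmη.eq_or_lt
  · refine ⟨m.2, hmS, ?_⟩
    simpa [← hm_eq, sub_sub] using hxm.2
  have hmx₀ : ‖m.2 - x₀‖ ≤ δ :=
    calc ‖m.2 - x₀‖ ≤ ‖m.2 - x‖ + ‖x - x₀‖ := norm_sub_le_norm_sub_add_norm_sub _ _ _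
      _ ≤ (‖v‖ + ε) * m.1 + ‖x - x₀‖ := by simpa using hxm.norm_sub_le
      _ ≤ δ := by nlinarith [norm_nonneg v]
  obtain ⟨t, ⟨ht, htη⟩, y, hyS, hy⟩ := h m.2 hmS hmx₀ (η - m.1) (sub_pos.2 hm_lt)
  have hmy : FollowsAlong v ε m (m.1 + t, y) :=
    ⟨by linarith, by simpa [sub_sub] using hy⟩
  have hback := (hmax ⟨(m.1 + t, y), by linarith, hyS, hxm.trans hmy⟩ hmy).1
  linarith

theorem ExactStepTangent.exists_mem_norm_sub_add_sum_le {ι : Type*} (F : Finset ι) (hε : 0 ≤ ε)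
    {z : ι → X} (hz : ∀ i ∈ F, ExactStepTangent S x₀ δ ε (z i)) {a : ι → ℝ}
    (ha : ∀ i ∈ F, 0 ≤ a i) {x : X} (hx : x ∈ S)
    (hbudget : ‖x - x₀‖ + ∑ i ∈ F, a i * (‖z i‖ + ε) ≤ δ) :
    ∃ y ∈ S, ‖y - (x + ∑ i ∈ F, a i • z i)‖ ≤ ε * ∑ i ∈ F, a i := by
  classical
  induction F using Finset.induction_on generalizing x with
  | empty => exact ⟨x, hx, by simp⟩
  | insert j F hj ih =>
    rw [Finset.sum_insert hj] at hbudget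
    rw [Finset.sum_insert hj, Finset.sum_insert hj]
    have hrest : 0 ≤ ∑ i ∈ F, a i * (‖z i‖ + ε) := Finset.sum_nonneg fun i hi =>
      mul_nonneg (ha i (Finset.mem_insert_of_mem hi)) (by positivity)
    have haj := ha j (Finset.mem_insert_self j F)
    obtain ⟨y₁, hy₁S, hy₁⟩ := hz j (Finset.mem_insert_self j F) x hx (a j) haj (by linarith)
    have hy₁x₀ : ‖y₁ - x₀‖ ≤ ‖x - x₀‖ + a j * (‖z j‖ + ε) :=
      calc ‖y₁ - x₀‖ = ‖(y₁ - (x + a j • z j)) + a j • z j + (x - x₀)‖ := by congr 1; abel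
        _ ≤ ε * a j + a j * ‖z j‖ + ‖x - x₀‖ := by
          refine norm_add₃_le.trans ?_
          rw [norm_smul, Real.norm_of_nonneg haj]
          gcongr
        _ = ‖x - x₀‖ + a j * (‖z j‖ + ε) := by ring
    obtain ⟨y, hyS, hy⟩ := ih (fun i hi => hz i (Finset.mem_insert_of_mem hi))
      (fun i hi => ha i (Finset.mem_insert_of_mem hi)) hy₁S (by linarith)
    refine ⟨y, hyS, ?_⟩
    calc ‖y - (x + (a j • z j + ∑ i ∈ F, a i • z i))‖
        = ‖(y - (y₁ + ∑ i ∈ F, a i • z i)) + (y₁ - (x + a j • z j))‖ := by congr 1; abel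
      _ ≤ ε * ∑ i ∈ F, a i + ε * a j := norm_add_le_of_le hy hy₁
      _ = ε * (a j + ∑ i ∈ F, a i) := by ring

theorem exists_mem_norm_sub_add_smul_le_of_mem_convexHull {D : Set X} {C t : ℝ} {x : X}
    (hε : 0 ≤ ε) (hD : ∀ z ∈ D, ExactStepTangent S x₀ δ ε z) (hDC : ∀ z ∈ D, ‖z‖ ≤ C)
    (hv : v ∈ convexHull ℝ D) (hx : x ∈ S) (ht : 0 ≤ t)
    (hbudget : ‖x - x₀‖ + t * (C + ε) ≤ δ) :
    ∃ y ∈ S, ‖y - (x + t • v)‖ ≤ ε * t := by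
  obtain ⟨ι, _, w, z, hw, hw₁, hzD, rfl⟩ := mem_convexHull_iff_exists_fintype.1 hv
  have hsum : ∑ i, t * w i * (‖z i‖ + ε) ≤ t * (C + ε) :=
    calc ∑ i, t * w i * (‖z i‖ + ε) ≤ ∑ i, t * w i * (C + ε) := by
          gcongr with i
          · exact mul_nonneg ht (hw i)
          · exact hDC _ (hzD i)
      _ = t * (C + ε) := by rw [← Finset.sum_mul, ← Finset.mul_sum, hw₁, mul_one]
  obtain ⟨y, hyS, hy⟩ := ExactStepTangent.exists_mem_norm_sub_add_sum_le Finset.univ hε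
    (fun i _ => hD _ (hzD i)) (fun i _ => mul_nonneg ht (hw i)) hx (by linarith)
  refine ⟨y, hyS, ?_⟩
  simpa only [Finset.smul_sum, smul_smul, ← Finset.mul_sum, hw₁, mul_one] using hy

end

theorem convexHull_sequence_uts_general
    {X : Type*} [NormedAddCommGroup X] [NormedSpace ℝ X] [CompleteSpace X]
    (S : Set X) (hS : IsClosed S) (x₀ : X)
    (D : Set X) (hD : Bornology.IsBounded D)
    (h : ∀ ε > (0:ℝ), ∃ δ > (0:ℝ), ∀ v ∈ D, ∀ x ∈ S, ‖x - x₀‖ ≤ δ →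
      ∃ t : ℕ → ℝ, (∀ m, 0 < t m) ∧ Tendsto t atTop (nhds 0) ∧
        ∀ m, ∃ b : X, ‖b‖ ≤ 1 ∧ x + t m • (v + ε • b) ∈ S) :
    ∀ ε > (0:ℝ), ∃ δ > (0:ℝ), ∀ v ∈ convexHull ℝ D, ∀ x ∈ S, ‖x - x₀‖ ≤ δ →
      ∃ t : ℕ → ℝ, (∀ m, 0 < t m) ∧ Tendsto t atTop (nhds 0) ∧
        ∀ m, ∃ b : X, ‖b‖ ≤ 1 ∧ x + t m • (v + ε • b) ∈ S := by
  intro ε hε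
  obtain ⟨δ, hδ, hseq⟩ := h ε hε
  obtain ⟨C, hC, hDC⟩ := hD.exists_pos_norm_le
  have hexact : ∀ z ∈ D, ExactStepTangent S x₀ δ ε z := fun z hz =>
    (smallStepTangent_of_seq hε (hseq z hz)).exactStepTangent hS hε.le
  refine ⟨δ / 2, by positivity, fun v hv x hx hxx₀ => ?_⟩
  obtain ⟨t, -, ht, hlim⟩ := exists_seq_strictAnti_tendsto' (by positivity : 0 < δ / 2 / (C + ε))
  refine ⟨t, fun m => (ht m).1, hlim, fun m => ?_⟩
  have hbudget : t m * (C + ε) < δ / 2 := (lt_div_iff₀ (by positivity)).1 (ht m).2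
  obtain ⟨y, hyS, hy⟩ := exists_mem_norm_sub_add_smul_le_of_mem_convexHull hε.le hexact hDC hv hx
    (ht m).1.le (by linarith)
  obtain ⟨b, hb, rfl⟩ := (norm_sub_add_smul_le_mul_iff hε (ht m).1).1 hy
  exact ⟨b, hb, hyS⟩

/-- The convex hull of a sequence uniform tangent set is a sequence uniform tangent set. -/
theorem convexHull_sequence_uts
    {X : Type*} [NormedAddCommGroup X] [NormedSpace ℝ X] [CompleteSpace X]
    (S : Set X) (hS : IsClosed S) (x₀ : X) (hx₀ : x₀ ∈ S)
    (D : Set X) (hD : Bornology.IsBounded D)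
    (h : ∀ ε > (0:ℝ), ∃ δ > (0:ℝ), ∀ v ∈ D, ∀ x ∈ S, ‖x - x₀‖ ≤ δ →
      ∃ t : ℕ → ℝ, (∀ m, 0 < t m) ∧ Tendsto t atTop (nhds 0) ∧
        ∀ m, ∃ b : X, ‖b‖ ≤ 1 ∧ x + t m • (v + ε • b) ∈ S) :
    ∀ ε > (0:ℝ), ∃ δ > (0:ℝ), ∀ v ∈ convexHull ℝ D, ∀ x ∈ S, ‖x - x₀‖ ≤ δ →
      ∃ t : ℕ → ℝ, (∀ m, 0 < t m) ∧ Tendsto t atTop (nhds 0) ∧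
        ∀ m, ∃ b : X, ‖b‖ ≤ 1 ∧ x + t m • (v + ε • b) ∈ S :=
  convexHull_sequence_uts_general S hS x₀ D hD h
end

section
/- Let X be a Banach space, S ⊆ X, x ∈ S, and suppose the Clarke tangent cone T̂_S(x) to S at x is separable. Then there exists a uniform tangent set D to S at x which generates T̂_S(x), i.e., the closure of the conical hull of D equals T̂_S(x). -/
/-!
Enumerate a countable dense subset `{vₙ}` of the Clarke tangent cone and shrink it to
`uₙ = aₙ • vₙ` with `aₙ > 0` and `uₙ → 0`. Positive rescaling changes neither the conical hull
nor membership in the (closed) cone, so `D = {uₙ}` generates the cone. It is a uniform tangent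
set: for a given `ε`, the finitely many `uₙ` with `‖uₙ‖ > ε` are handled by taking the least of
their Clarke radii, and every vector of norm at most `ε` is tangent with error `ε` at every point,
via the correction `b = -ε⁻¹ • v`.
-/

open Metric

/-- The Clarke tangent cone to `S` at `x` (Rockafellar's definition). -/
def clarkeTangentCone {X : Type*} [NormedAddCommGroup X] [NormedSpace ℝ X]
    (S : Set X) (x : X) : Set X :=
  {v : X | ∀ ε > (0:ℝ), ∃ δ > (0:ℝ), ∃ lam > (0:ℝ), ∀ y ∈ S, ‖y - x‖ ≤ δ →
    ∀ t ∈ Set.Icc (0:ℝ) lam, ∃ b : X, ‖b‖ ≤ 1 ∧ y + t • (v + ε • b) ∈ S}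

open Filter Topology

section ClarkeTangent

variable {X : Type*} [NormedAddCommGroup X] [NormedSpace ℝ X] {S : Set X} {x : X}

namespace clarkeTangentCone

theorem zero_mem : (0 : X) ∈ clarkeTangentCone S x :=
  fun _ _ => ⟨1, one_pos, 1, one_pos, fun y hy _ _ _ => ⟨0, by simp, by simpa using hy⟩⟩

theorem smul_mem {v : X} (hv : v ∈ clarkeTangentCone S x) {α : ℝ} (hα : 0 < α) :
    α • v ∈ clarkeTangentCone S x := by
  intro ε hε
  obtain ⟨δ, hδ, lam, hlam, H⟩ := hv (ε / α) (div_pos hε hα)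
  refine ⟨δ, hδ, lam / α, div_pos hlam hα, fun y hy hyx t ht => ?_⟩
  have htα : t * α ∈ Set.Icc 0 lam :=
    ⟨mul_nonneg ht.1 hα.le, (le_div_iff₀ hα).1 ht.2⟩
  obtain ⟨b, hb, hbS⟩ := H y hy hyx (t * α) htα
  refine ⟨b, hb, ?_⟩
  have hrescale : (t * α) • (v + (ε / α) • b) = t • (α • v + ε • b) := by
    rw [smul_add, smul_add, smul_smul, smul_smul, smul_smul, mul_assoc t α,
      mul_div_cancel₀ ε hα.ne']
  rwa [hrescale] at hbS

theorem isClosed : IsClosed (clarkeTangentCone S x) := by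
  refine isClosed_of_closure_subset fun v hv ε hε => ?_
  obtain ⟨w, hw, hwv⟩ := Metric.mem_closure_iff.1 hv (ε / 2) (half_pos hε)
  obtain ⟨δ, hδ, lam, hlam, H⟩ := hw (ε / 2) (half_pos hε)
  refine ⟨δ, hδ, lam, hlam, fun y hy hyx t ht => ?_⟩
  obtain ⟨b, hb, hbS⟩ := H y hy hyx t ht
  -- absorb the error `w - v` into the correction term
  refine ⟨ε⁻¹ • (w - v + (ε / 2) • b), ?_, ?_⟩
  · have hsum : ‖w - v + (ε / 2) • b‖ ≤ ε :=
      calc ‖w - v + (ε / 2) • b‖ ≤ ‖w - v‖ + ‖(ε / 2) • b‖ := norm_add_le _ _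
        _ = ‖w - v‖ + ε / 2 * ‖b‖ := by rw [norm_smul, Real.norm_of_nonneg (half_pos hε).le]
        _ ≤ ε / 2 + ε / 2 * 1 := by
            gcongr
            rw [← dist_eq_norm, dist_comm]
            exact hwv.le
        _ = ε := by ring
    rw [norm_smul, Real.norm_of_nonneg (inv_nonneg.2 hε.le), inv_mul_le_iff₀ hε, mul_one]
    exact hsum
  · rwa [smul_smul, mul_inv_cancel₀ hε.ne', one_smul, ← add_assoc, add_sub_cancel]

end clarkeTangentCone

def UniformlyTangentWithin (S : Set X) (x : X) (ε δ : ℝ) (D : Set X) : Prop :=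
  ∀ v ∈ D, ∀ y ∈ S, ‖y - x‖ ≤ δ → ∃ lam > (0:ℝ), ∀ t ∈ Set.Icc (0:ℝ) lam,
    ∃ b : X, ‖b‖ ≤ 1 ∧ y + t • (v + ε • b) ∈ S

def IsUniformTangentSet (S : Set X) (x : X) (D : Set X) : Prop :=
  ∀ ε > (0:ℝ), ∃ δ > (0:ℝ), UniformlyTangentWithin S x ε δ D

namespace UniformlyTangentWithin

variable {ε δ : ℝ} {D D' : Set X}

theorem mono (h : UniformlyTangentWithin S x ε δ D) {δ' : ℝ} (hδ : δ' ≤ δ) (hD : D' ⊆ D) :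
    UniformlyTangentWithin S x ε δ' D' :=
  fun v hv y hy hyx => h v (hD hv) y hy (hyx.trans hδ)

theorem union (h : UniformlyTangentWithin S x ε δ D) (h' : UniformlyTangentWithin S x ε δ D') :
    UniformlyTangentWithin S x ε δ (D ∪ D') := by
  rintro v (hv | hv)
  exacts [h v hv, h' v hv]

theorem of_norm_le (hε : 0 < ε) (hD : ∀ v ∈ D, ‖v‖ ≤ ε) : UniformlyTangentWithin S x ε δ D := by
  refine fun v hv y hy _ => ⟨1, one_pos, fun t _ => ⟨-(ε⁻¹ • v), ?_, ?_⟩⟩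
  · rw [norm_neg, norm_smul, Real.norm_of_nonneg (inv_nonneg.2 hε.le), inv_mul_le_iff₀ hε,
      mul_one]
    exact hD v hv
  · rwa [smul_neg, smul_smul, mul_inv_cancel₀ hε.ne', one_smul, add_neg_cancel, smul_zero,
      add_zero]

end UniformlyTangentWithin

theorem exists_uniformlyTangentWithin_of_finite {D : Set X} (hfin : D.Finite)
    (hD : D ⊆ clarkeTangentCone S x) {ε : ℝ} (hε : 0 < ε) :
    ∃ δ > 0, UniformlyTangentWithin S x ε δ D := by
  induction D, hfin using Set.Finite.induction_on with
  | empty => exact ⟨1, one_pos, fun v hv => absurd hv (Set.notMem_empty v)⟩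
  | @insert v D _ _ ih =>
    obtain ⟨δ, hδ, hDδ⟩ := ih ((Set.subset_insert v D).trans hD)
    obtain ⟨δv, hδv, lam, hlam, H⟩ := hD (Set.mem_insert v D) ε hε
    have hvδv : UniformlyTangentWithin S x ε δv {v} := by
      rintro _ rfl y hy hyx
      exact ⟨lam, hlam, H y hy hyx⟩
    refine ⟨min δv δ, lt_min hδv hδ, ?_⟩
    rw [Set.insert_eq]
    exact (hvδv.mono (min_le_left _ _) le_rfl).union (hDδ.mono (min_le_right _ _) le_rfl)

theorem isUniformTangentSet_range_of_tendsto_zero {u : ℕ → X}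
    (hu : ∀ n, u n ∈ clarkeTangentCone S x) (hlim : Tendsto u atTop (𝓝 0)) :
    IsUniformTangentSet S x (Set.range u) := by
  intro ε hε
  obtain ⟨N, hN⟩ := eventually_atTop.1 <|
    (tendsto_zero_iff_norm_tendsto_zero.1 hlim).eventually (eventually_le_nhds hε)
  obtain ⟨δ, hδ, hhead⟩ := exists_uniformlyTangentWithin_of_finite
    ((Set.finite_Iio N).image u) (Set.image_subset_iff.2 fun n _ => hu n) hε
  have htail : UniformlyTangentWithin S x ε δ (u '' Set.Ici N) :=
    .of_norm_le hε (Set.forall_mem_image.2 fun n hn => hN n hn)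
  refine ⟨δ, hδ, (hhead.union htail).mono le_rfl ?_⟩
  rintro _ ⟨n, rfl⟩
  rcases lt_or_ge n N with hn | hn
  exacts [Or.inl ⟨n, hn, rfl⟩, Or.inr ⟨n, hn, rfl⟩]

end ClarkeTangent

section ConicalHull

variable {E : Type*} [NormedAddCommGroup E] [NormedSpace ℝ E]

def conicalHull (D : Set E) : Set E :=
  {y | ∃ α > (0:ℝ), ∃ d ∈ D, y = α • d}

theorem subset_conicalHull (D : Set E) : D ⊆ conicalHull D :=
  fun d hd => ⟨1, one_pos, d, hd, (one_smul ℝ d).symm⟩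

theorem conicalHull_range_smul {ι : Type*} (v : ι → E) {a : ι → ℝ} (ha : ∀ i, 0 < a i) :
    conicalHull (Set.range fun i => a i • v i) = conicalHull (Set.range v) := by
  ext y
  constructor
  · rintro ⟨α, hα, _, ⟨i, rfl⟩, rfl⟩
    exact ⟨α * a i, mul_pos hα (ha i), v i, ⟨i, rfl⟩, smul_smul α (a i) (v i)⟩
  · rintro ⟨α, hα, _, ⟨i, rfl⟩, rfl⟩
    refine ⟨α * (a i)⁻¹, mul_pos hα (inv_pos.2 (ha i)), a i • v i, ⟨i, rfl⟩, ?_⟩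
    rw [smul_smul, mul_assoc, inv_mul_cancel₀ (ha i).ne', mul_one]

theorem exists_pos_smul_tendsto_zero (v : ℕ → E) :
    ∃ a : ℕ → ℝ, (∀ n, 0 < a n) ∧ Tendsto (fun n => a n • v n) atTop (𝓝 0) := by
  refine ⟨fun n => ((n + 1) * (‖v n‖ + 1))⁻¹, fun n => by positivity, ?_⟩
  refine squeeze_zero_norm (fun n => ?_) tendsto_one_div_add_atTop_nhds_zero_nat
  dsimp only
  rw [norm_smul, Real.norm_of_nonneg (by positivity), mul_inv, mul_assoc, one_div]
  refine mul_le_of_le_one_right (by positivity) ?_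
  rw [inv_mul_le_iff₀ (by positivity), mul_one]
  exact le_add_of_nonneg_right zero_le_one

end ConicalHull

theorem closure_conicalHull_eq_clarkeTangentCone {X : Type*} [NormedAddCommGroup X]
    [NormedSpace ℝ X] {S : Set X} {x : X} {D : Set X} (hD : D ⊆ clarkeTangentCone S x)
    (hdense : clarkeTangentCone S x ⊆ closure D) :
    closure (conicalHull D) = clarkeTangentCone S x := by
  refine (closure_minimal ?_ clarkeTangentCone.isClosed).antisymm
    (hdense.trans (closure_mono (subset_conicalHull D)))
  rintro _ ⟨α, hα, d, hd, rfl⟩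
  exact clarkeTangentCone.smul_mem (hD hd) hα

theorem exists_uts_generating_clarkeTangentCone_general
    {X : Type*} [NormedAddCommGroup X] [NormedSpace ℝ X]
    (S : Set X) (x : X)
    (hsep : TopologicalSpace.IsSeparable (clarkeTangentCone S x)) :
    ∃ D : Set X, Bornology.IsBounded D ∧
      (∀ ε > (0:ℝ), ∃ δ > (0:ℝ), ∀ v ∈ D, ∀ y ∈ S, ‖y - x‖ ≤ δ →
        ∃ lam > (0:ℝ), ∀ t ∈ Set.Icc (0:ℝ) lam,
          ∃ b : X, ‖b‖ ≤ 1 ∧ y + t • (v + ε • b) ∈ S) ∧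
      closure {y : X | ∃ α > (0:ℝ), ∃ d ∈ D, y = α • d} = clarkeTangentCone S x := by
  obtain ⟨c, hcT, hcc, hTc⟩ := hsep.exists_countable_dense_subset
  have hc : c.Nonempty := by
    by_contra hempty
    rw [Set.not_nonempty_iff_eq_empty.1 hempty, closure_empty] at hTc
    exact hTc clarkeTangentCone.zero_mem
  obtain ⟨v, rfl⟩ := hcc.exists_eq_range hc
  obtain ⟨a, ha, hlim⟩ := exists_pos_smul_tendsto_zero v
  have hvT : ∀ n, v n ∈ clarkeTangentCone S x := fun n => hcT ⟨n, rfl⟩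
  refine ⟨Set.range fun n => a n • v n, isBounded_range_of_tendsto _ hlim,
    isUniformTangentSet_range_of_tendsto_zero (fun n => clarkeTangentCone.smul_mem (hvT n) (ha n))
      hlim, ?_⟩
  change closure (conicalHull _) = _
  rw [conicalHull_range_smul v ha]
  exact closure_conicalHull_eq_clarkeTangentCone (Set.range_subset_iff.2 hvT) hTc

/-- If the Clarke tangent cone is separable, there is a uniform tangent set generating it. -/
theorem exists_uts_generating_clarkeTangentCone
    {X : Type*} [NormedAddCommGroup X] [NormedSpace ℝ X] [CompleteSpace X]
    (S : Set X) (x : X) (hx : x ∈ S)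
    (hsep : TopologicalSpace.IsSeparable (clarkeTangentCone S x)) :
    ∃ D : Set X, Bornology.IsBounded D ∧
      (∀ ε > (0:ℝ), ∃ δ > (0:ℝ), ∀ v ∈ D, ∀ y ∈ S, ‖y - x‖ ≤ δ →
        ∃ lam > (0:ℝ), ∀ t ∈ Set.Icc (0:ℝ) lam,
          ∃ b : X, ‖b‖ ≤ 1 ∧ y + t • (v + ε • b) ∈ S) ∧
      closure {y : X | ∃ α > (0:ℝ), ∃ d ∈ D, y = α • d} = clarkeTangentCone S x :=
  exists_uts_generating_clarkeTangentCone_general S x hsep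
end

section
/- Let X be a Banach space, let {vₙ} be a dense subset of the intersection of the Clarke tangent cone T̂_S(x) with the unit sphere, and let {λₙ} be positive reals tending to 0. Then the set D = {λₙ vₙ : n ∈ ℕ} is a uniform tangent set to S at x whose generated cone (closure of the conical hull) equals T̂_S(x). -/
/-!
Every `λₙ vₙ` lies in the Clarke cone, which is a closed cone. Uniform tangency for a fixed `ε`
only has to be checked on the finitely many `λₙ vₙ` of norm `> ε`, where it is the definition
of the Clarke cone with the minimum of finitely many radii; a vector of norm `≤ ε` is absorbed by
the `ε`-ball itself. For the generated cone, `λₙ > 0` makes the conical hull of `{λₙ vₙ}` that of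
`{vₙ}`, and density of `{vₙ}` in the unit part of the Clarke cone gives every nonzero Clarke
tangent vector as a limit of positive multiples of the `vₙ`.
-/

open Metric Filter Set Topology
open scoped Pointwise

section

variable {X : Type*} [NormedAddCommGroup X] [NormedSpace ℝ X]

/-- `D` is a uniform tangent set iff it is bounded and this holds for every `ε > 0`. -/
def IsUniformlyTangent (S : Set X) (x : X) (ε : ℝ) (D : Set X) : Prop :=
  ∃ δ > (0:ℝ), ∀ w ∈ D, ∀ y ∈ S, ‖y - x‖ ≤ δ → ∃ mu > (0:ℝ), ∀ t ∈ Icc (0:ℝ) mu,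
    ∃ b : X, ‖b‖ ≤ 1 ∧ y + t • (w + ε • b) ∈ S

def conicHull (D : Set X) : Set X :=
  {y | ∃ α > (0:ℝ), ∃ d ∈ D, y = α • d}

variable {S : Set X} {x : X}

theorem smul_mem_clarkeTangentCone {u : X} (hu : u ∈ clarkeTangentCone S x) {c : ℝ}
    (hc : 0 < c) : c • u ∈ clarkeTangentCone S x := by
  intro ε hε
  obtain ⟨δ, hδ, μ, hμ, H⟩ := hu (ε / c) (div_pos hε hc)
  refine ⟨δ, hδ, μ / c, div_pos hμ hc, fun y hy hyx t ht => ?_⟩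
  have htc : t * c ∈ Icc 0 μ :=
    ⟨mul_nonneg ht.1 hc.le, (le_div_iff₀ hc).1 ht.2⟩
  obtain ⟨b, hb, hbS⟩ := H y hy hyx (t * c) htc
  refine ⟨b, hb, ?_⟩
  have key : t • (c • u + ε • b) = (t * c) • (u + (ε / c) • b) := by
    match_scalars <;> field_simp
  rwa [key]

theorem isClosed_clarkeTangentCone : IsClosed (clarkeTangentCone S x) := by
  refine isClosed_of_closure_subset fun u hu ε hε => ?_
  obtain ⟨w, hw, hwu⟩ := Metric.mem_closure_iff.1 hu (ε / 2) (half_pos hε)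
  obtain ⟨δ, hδ, μ, hμ, H⟩ := hw (ε / 2) (half_pos hε)
  refine ⟨δ, hδ, μ, hμ, fun y hy hyx t ht => ?_⟩
  obtain ⟨b, hb, hbS⟩ := H y hy hyx t ht
  -- the error `w - u` is absorbed into the half of the `ε`-ball left over
  refine ⟨ε⁻¹ • (w - u) + (2:ℝ)⁻¹ • b, ?_, ?_⟩
  · have hwu' : ‖w - u‖ ≤ ε / 2 := by
      rw [← dist_eq_norm, dist_comm]; exact hwu.le
    calc ‖ε⁻¹ • (w - u) + (2:ℝ)⁻¹ • b‖
        ≤ ε⁻¹ * ‖w - u‖ + 2⁻¹ * ‖b‖ := by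
          refine (norm_add_le _ _).trans_eq ?_
          rw [norm_smul, norm_smul, Real.norm_of_nonneg (inv_pos.2 hε).le,
            Real.norm_of_nonneg (by norm_num)]
      _ ≤ ε⁻¹ * (ε / 2) + 2⁻¹ * 1 := by gcongr
      _ = 1 := by field_simp; norm_num
  · have key : u + ε • (ε⁻¹ • (w - u) + (2:ℝ)⁻¹ • b) = w + (ε / 2) • b := by
      match_scalars <;> field_simp; ring
    rwa [key]

namespace IsUniformlyTangent

variable {ε : ℝ} {D D' : Set X}

theorem mono (h : IsUniformlyTangent S x ε D) (hD : D' ⊆ D) : IsUniformlyTangent S x ε D' :=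
  let ⟨δ, hδ, H⟩ := h
  ⟨δ, hδ, fun w hw => H w (hD hw)⟩

theorem union (h : IsUniformlyTangent S x ε D) (h' : IsUniformlyTangent S x ε D') :
    IsUniformlyTangent S x ε (D ∪ D') := by
  obtain ⟨δ, hδ, H⟩ := h
  obtain ⟨δ', hδ', H'⟩ := h'
  refine ⟨min δ δ', lt_min hδ hδ', fun w hw y hy hyx => ?_⟩
  rcases hw with hw | hw
  · exact H w hw y hy (hyx.trans (min_le_left _ _))
  · exact H' w hw y hy (hyx.trans (min_le_right _ _))

end IsUniformlyTangent

theorem isUniformlyTangent_singleton {u : X} (hu : u ∈ clarkeTangentCone S x) {ε : ℝ}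
    (hε : 0 < ε) : IsUniformlyTangent S x ε {u} := by
  obtain ⟨δ, hδ, μ, hμ, H⟩ := hu ε hε
  exact ⟨δ, hδ, fun w hw y hy hyx => ⟨μ, hμ, (mem_singleton_iff.1 hw).symm ▸ H y hy hyx⟩⟩

theorem isUniformlyTangent_of_finite {D : Set X} (hD : D.Finite)
    (hDT : D ⊆ clarkeTangentCone S x) {ε : ℝ} (hε : 0 < ε) : IsUniformlyTangent S x ε D := by
  induction D, hD using Set.Finite.induction_on with
  | empty => exact ⟨1, one_pos, fun w hw => absurd hw (notMem_empty w)⟩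
  | insert _ _ ih =>
    rw [insert_eq] at hDT ⊢
    exact (isUniformlyTangent_singleton (hDT (Or.inl rfl)) hε).union
      (ih (union_subset_iff.1 hDT).2)

theorem isUniformlyTangent_of_subset_closedBall {ε : ℝ} (hε : 0 < ε) {D : Set X}
    (hD : D ⊆ closedBall 0 ε) : IsUniformlyTangent S x ε D := by
  refine ⟨1, one_pos, fun w hw y hy _ => ⟨1, one_pos, fun t _ => ⟨-ε⁻¹ • w, ?_, ?_⟩⟩⟩
  · rw [norm_smul, norm_neg, Real.norm_of_nonneg (inv_pos.2 hε).le, inv_mul_le_iff₀ hε,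
      mul_one]
    simpa using hD hw
  · rwa [smul_smul, mul_neg, mul_inv_cancel₀ hε.ne', neg_one_smul, add_neg_cancel, smul_zero,
      add_zero]

theorem isUniformlyTangent_range_of_tendsto_zero {w : ℕ → X}
    (hwT : ∀ n, w n ∈ clarkeTangentCone S x) (hw : Tendsto w atTop (𝓝 0)) {ε : ℝ}
    (hε : 0 < ε) : IsUniformlyTangent S x ε (range w) := by
  obtain ⟨N, hN⟩ := eventually_atTop.1 (hw.eventually (closedBall_mem_nhds 0 hε))
  have hsplit : range w ⊆ w '' Iio N ∪ closedBall 0 ε := by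
    rintro _ ⟨n, rfl⟩
    rcases lt_or_ge n N with hn | hn
    · exact Or.inl (mem_image_of_mem w hn)
    · exact Or.inr (hN n hn)
  refine IsUniformlyTangent.mono ?_ hsplit
  refine (isUniformlyTangent_of_finite ((finite_Iio N).image w) ?_ hε).union
    (isUniformlyTangent_of_subset_closedBall hε subset_rfl)
  rintro _ ⟨n, -, rfl⟩
  exact hwT n

theorem conicHull_range_smul {ι : Type*} {lam : ι → ℝ} (hlam : ∀ i, 0 < lam i) (v : ι → X) :
    conicHull (range fun i => lam i • v i) = conicHull (range v) := by
  ext y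
  constructor
  · rintro ⟨α, hα, _, ⟨i, rfl⟩, rfl⟩
    exact ⟨α * lam i, mul_pos hα (hlam i), v i, mem_range_self i, (mul_smul _ _ _).symm⟩
  · rintro ⟨α, hα, _, ⟨i, rfl⟩, rfl⟩
    refine ⟨α / lam i, div_pos hα (hlam i), lam i • v i, mem_range_self i, ?_⟩
    rw [smul_smul, div_mul_cancel₀ _ (hlam i).ne']

theorem closure_conicHull_subset_clarkeTangentCone {D : Set X}
    (hD : D ⊆ clarkeTangentCone S x) : closure (conicHull D) ⊆ clarkeTangentCone S x := by
  refine isClosed_clarkeTangentCone.closure_subset_iff.2 ?_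
  rintro _ ⟨α, hα, d, hd, rfl⟩
  exact smul_mem_clarkeTangentCone (hD hd) hα

theorem zero_mem_closure_conicHull {D : Set X} (hD : D.Nonempty) :
    (0 : X) ∈ closure (conicHull D) := by
  obtain ⟨d, hd⟩ := hD
  have hlim : Tendsto (fun α : ℝ => α • d) (𝓝[>] 0) (𝓝 0) := by
    simpa using (tendsto_id.smul_const d).mono_left (nhdsWithin_le_nhds (a := (0:ℝ)))
  refine mem_closure_of_tendsto hlim ?_
  filter_upwards [self_mem_nhdsWithin] with α hα using ⟨α, hα, d, hd, rfl⟩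

theorem smul_closure_subset_closure_conicHull {D : Set X} {c : ℝ} (hc : 0 < c) :
    c • closure D ⊆ closure (conicHull D) := by
  refine (image_closure_subset_closure_image (continuous_const_smul c)).trans
    (closure_mono ?_)
  rintro _ ⟨d, hd, rfl⟩
  exact ⟨c, hc, d, hd, rfl⟩

theorem clarkeTangentCone_subset_closure_conicHull {D : Set X}
    (hdense : clarkeTangentCone S x ∩ sphere 0 1 ⊆ closure D) (hD : D.Nonempty) :
    clarkeTangentCone S x ⊆ closure (conicHull D) := by
  intro u hu
  rcases eq_or_ne u 0 with rfl | hu0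
  · exact zero_mem_closure_conicHull hD
  have hnorm : 0 < ‖u‖ := norm_pos_iff.2 hu0
  have hunit : ‖u‖⁻¹ • u ∈ clarkeTangentCone S x ∩ sphere 0 1 := by
    refine ⟨smul_mem_clarkeTangentCone hu (inv_pos.2 hnorm), ?_⟩
    rw [mem_sphere_zero_iff_norm, norm_smul, norm_inv, norm_norm, inv_mul_cancel₀ hnorm.ne']
  have hu_eq : u = ‖u‖ • ‖u‖⁻¹ • u := by
    rw [smul_smul, mul_inv_cancel₀ hnorm.ne', one_smul]
  rw [hu_eq]
  exact smul_closure_subset_closure_conicHull hnorm (smul_mem_smul_set (hdense hunit))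

end

theorem scaled_dense_sequence_is_uts_generating_clarke_general
    {X : Type*} [NormedAddCommGroup X] [NormedSpace ℝ X]
    (S : Set X) (x : X)
    (v : ℕ → X) (hv : ∀ n, v n ∈ clarkeTangentCone S x ∩ sphere (0:X) 1)
    (hdense : clarkeTangentCone S x ∩ sphere (0:X) 1 ⊆ closure (Set.range v))
    (lam : ℕ → ℝ) (hlam : ∀ n, 0 < lam n) (hlam0 : Tendsto lam atTop (nhds 0)) :
    (Bornology.IsBounded (Set.range fun n => lam n • v n)) ∧
    (∀ ε > (0:ℝ), ∃ δ > (0:ℝ), ∀ w ∈ Set.range (fun n => lam n • v n),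
      ∀ y ∈ S, ‖y - x‖ ≤ δ → ∃ mu > (0:ℝ), ∀ t ∈ Set.Icc (0:ℝ) mu,
        ∃ b : X, ‖b‖ ≤ 1 ∧ y + t • (w + ε • b) ∈ S) ∧
    closure {y : X | ∃ α > (0:ℝ), ∃ d ∈ Set.range (fun n => lam n • v n), y = α • d}
      = clarkeTangentCone S x := by
  have hvT : range v ⊆ clarkeTangentCone S x := by
    rintro _ ⟨n, rfl⟩
    exact (hv n).1
  have hw0 : Tendsto (fun n => lam n • v n) atTop (𝓝 0) :=
    hlam0.zero_smul_isBoundedUnder_le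
      ⟨1, eventually_map.2 (.of_forall fun n => (mem_sphere_zero_iff_norm.1 (hv n).2).le)⟩
  refine ⟨hw0.cauchySeq.isBounded_range,
    fun ε hε => isUniformlyTangent_range_of_tendsto_zero
      (fun n => smul_mem_clarkeTangentCone (hv n).1 (hlam n)) hw0 hε, ?_⟩
  change closure (conicHull _) = _
  rw [conicHull_range_smul hlam]
  exact (closure_conicHull_subset_clarkeTangentCone hvT).antisymm
    (clarkeTangentCone_subset_closure_conicHull hdense (range_nonempty v))

/-- Given a dense subset `{vₙ}` of `T̂_S(x) ∩ Σ` and positive reals `λₙ → 0`, the set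
`{λₙ vₙ}` is a uniform tangent set to `S` at `x` generating the Clarke tangent cone. -/
theorem scaled_dense_sequence_is_uts_generating_clarke
    {X : Type*} [NormedAddCommGroup X] [NormedSpace ℝ X] [CompleteSpace X]
    (S : Set X) (x : X) (hx : x ∈ S)
    (v : ℕ → X) (hv : ∀ n, v n ∈ clarkeTangentCone S x ∩ sphere (0:X) 1)
    (hdense : clarkeTangentCone S x ∩ sphere (0:X) 1 ⊆ closure (Set.range v))
    (lam : ℕ → ℝ) (hlam : ∀ n, 0 < lam n) (hlam0 : Tendsto lam atTop (nhds 0)) :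
    (Bornology.IsBounded (Set.range fun n => lam n • v n)) ∧
    (∀ ε > (0:ℝ), ∃ δ > (0:ℝ), ∀ w ∈ Set.range (fun n => lam n • v n),
      ∀ y ∈ S, ‖y - x‖ ≤ δ → ∃ mu > (0:ℝ), ∀ t ∈ Set.Icc (0:ℝ) mu,
        ∃ b : X, ‖b‖ ≤ 1 ∧ y + t • (w + ε • b) ∈ S) ∧
    closure {y : X | ∃ α > (0:ℝ), ∃ d ∈ Set.range (fun n => lam n • v n), y = α • d}
      = clarkeTangentCone S x :=
  scaled_dense_sequence_is_uts_generating_clarke_general S x v hv hdense lam hlam hlam0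
end

section
/- If D is a uniform tangent set to a closed set S at x₀ ∈ S (in the strong, λ-uniform sense: for each ε > 0 there exist δ > 0 and λ > 0 such that S ∩ (x + t(v + ε·closedBall)) ≠ ∅ for all v ∈ D, x ∈ S ∩ (x₀ + δ·closedBall), t ∈ [0, λ]), then the convex hull of D is a uniform tangent set to S at x₀ in the same strong sense. -/
/-!
Fix `ε` and the `δ`, `λ` that the hypothesis provides for it, and let `M > 0` bound `D`, so that
every move `x ↦ x + t • (v + ε • b)` with `‖v‖ ≤ M`, `‖b‖ ≤ 1` has speed at most `K = M + ε`.
Call `v` admissible if it works from every `x ∈ S` that can still travel for time `t ≤ λ` at speed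
`K` without leaving the `δ`-ball around `x₀`. Admissible directions of norm `≤ M` form a convex
set: to follow `a • v₁ + b • v₂` for time `t`, follow `v₁` for time `a t` and then `v₂` for time
`b t`; the budget guarantees that the intermediate point still qualifies, and the two unit
correction vectors combine to `a • b₁ + b • b₂`. This set contains `D`, hence its convex hull, and
every `x` with `‖x - x₀‖ ≤ δ / 2` has the budget for times up to `min λ (δ / (2K))`.
-/

open Metric

section BudgetedTangent

variable {X : Type*} [NormedAddCommGroup X] [NormedSpace ℝ X]

def budgetedTangentSet (S : Set X) (x₀ : X) (ε δ lam K : ℝ) : Set X :=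
  {v | ∀ x ∈ S, ∀ t ∈ Set.Icc 0 lam, ‖x - x₀‖ + t * K ≤ δ →
    ∃ b : X, ‖b‖ ≤ 1 ∧ x + t • (v + ε • b) ∈ S}

variable {S : Set X} {x₀ v x : X} {ε δ lam K M t r : ℝ}

theorem mem_budgetedTangentSet_of_forall (hK : 0 ≤ K)
    (hv : ∀ x ∈ S, ‖x - x₀‖ ≤ δ → ∀ t ∈ Set.Icc 0 lam,
      ∃ b : X, ‖b‖ ≤ 1 ∧ x + t • (v + ε • b) ∈ S) :
    v ∈ budgetedTangentSet S x₀ ε δ lam K :=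
  fun x hx t ht hbudget => hv x hx (by nlinarith [mul_nonneg ht.1 hK]) t ht

theorem norm_add_smul_le_of_norm_le (hε : 0 ≤ ε) (hvM : ‖v‖ ≤ M) {b : X} (hb : ‖b‖ ≤ 1) :
    ‖v + ε • b‖ ≤ M + ε :=
  calc ‖v + ε • b‖ ≤ ‖v‖ + ε * ‖b‖ :=
        (norm_add_le _ _).trans_eq (by rw [norm_smul, Real.norm_of_nonneg hε])
    _ ≤ M + ε * 1 := by gcongr
    _ = M + ε := by ring

theorem exists_step_of_mem_budgetedTangentSet (hε : 0 ≤ ε) (hvM : ‖v‖ ≤ M)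
    (hv : v ∈ budgetedTangentSet S x₀ ε δ lam (M + ε)) (hx : x ∈ S) (ht : t ∈ Set.Icc 0 lam)
    (hr : 0 ≤ r) (hbudget : ‖x - x₀‖ + t * (M + ε) + r ≤ δ) :
    ∃ b : X, ‖b‖ ≤ 1 ∧ x + t • (v + ε • b) ∈ S ∧ ‖x + t • (v + ε • b) - x₀‖ + r ≤ δ := by
  obtain ⟨b, hb, hmem⟩ := hv x hx t ht (by linarith)
  refine ⟨b, hb, hmem, ?_⟩
  have hmove : ‖t • (v + ε • b)‖ ≤ t * (M + ε) := by
    rw [norm_smul, Real.norm_of_nonneg ht.1]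
    exact mul_le_mul_of_nonneg_left (norm_add_smul_le_of_norm_le hε hvM hb) ht.1
  calc ‖x + t • (v + ε • b) - x₀‖ + r = ‖(x - x₀) + t • (v + ε • b)‖ + r := by
        rw [add_sub_right_comm]
    _ ≤ ‖x - x₀‖ + t * (M + ε) + r := by grw [norm_add_le, hmove]
    _ ≤ δ := hbudget

theorem convex_closedBall_inter_budgetedTangentSet (hε : 0 ≤ ε) :
    Convex ℝ (closedBall (0 : X) M ∩ budgetedTangentSet S x₀ ε δ lam (M + ε)) := by
  rintro v₁ ⟨hv₁M, hv₁⟩ v₂ ⟨hv₂M, hv₂⟩ a b ha hb hab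
  refine ⟨convex_closedBall _ _ hv₁M hv₂M ha hb hab, ?_⟩
  rw [mem_closedBall_zero_iff] at hv₁M
  intro x hx t ht hbudget
  have hK : 0 ≤ M + ε := by linarith [norm_nonneg v₁]
  have hat : a * t ∈ Set.Icc 0 lam := ⟨mul_nonneg ha ht.1, by nlinarith [ht.1, ht.2]⟩
  have hbt : b * t ∈ Set.Icc 0 lam := ⟨mul_nonneg hb ht.1, by nlinarith [ht.1, ht.2]⟩
  have hsplit : a * t * (M + ε) + b * t * (M + ε) = t * (M + ε) := by
    rw [← add_mul, ← add_mul, hab, one_mul]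
  obtain ⟨u₁, hu₁, hy, hybudget⟩ := exists_step_of_mem_budgetedTangentSet hε hv₁M hv₁ hx hat
    (mul_nonneg hbt.1 hK) (by linarith)
  obtain ⟨u₂, hu₂, hz⟩ := hv₂ _ hy (b * t) hbt hybudget
  refine ⟨a • u₁ + b • u₂, ?_, ?_⟩
  · rw [← mem_closedBall_zero_iff] at hu₁ hu₂ ⊢
    exact convex_closedBall _ _ hu₁ hu₂ ha hb hab
  · convert hz using 1
    module

end BudgetedTangent

theorem convexHull_strong_uts_general
    {X : Type*} [NormedAddCommGroup X] [NormedSpace ℝ X]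
    (S : Set X) (x₀ : X)
    (D : Set X) (hD : Bornology.IsBounded D)
    (h : ∀ ε > (0:ℝ), ∃ δ > (0:ℝ), ∃ lam > (0:ℝ), ∀ v ∈ D, ∀ x ∈ S, ‖x - x₀‖ ≤ δ →
      ∀ t ∈ Set.Icc (0:ℝ) lam, ∃ b : X, ‖b‖ ≤ 1 ∧ x + t • (v + ε • b) ∈ S) :
    ∀ ε > (0:ℝ), ∃ δ > (0:ℝ), ∃ lam > (0:ℝ), ∀ v ∈ convexHull ℝ D, ∀ x ∈ S,
      ‖x - x₀‖ ≤ δ → ∀ t ∈ Set.Icc (0:ℝ) lam,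
        ∃ b : X, ‖b‖ ≤ 1 ∧ x + t • (v + ε • b) ∈ S := by
  intro ε hε
  obtain ⟨δ, hδ, lam, hlam, hD_tangent⟩ := h ε hε
  obtain ⟨M, hM, hDM⟩ := hD.exists_pos_norm_le
  have hK : 0 < M + ε := by positivity
  have hD_sub : D ⊆ closedBall 0 M ∩ budgetedTangentSet S x₀ ε δ lam (M + ε) := fun v hv =>
    ⟨mem_closedBall_zero_iff.mpr (hDM v hv),
      mem_budgetedTangentSet_of_forall hK.le (hD_tangent v hv)⟩
  have hhull_sub := convexHull_min hD_sub (convex_closedBall_inter_budgetedTangentSet hε.le)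
  refine ⟨δ / 2, by positivity, min lam (δ / (2 * (M + ε))), lt_min hlam (by positivity), ?_⟩
  rintro v hv x hx hxδ t ⟨ht₀, htlam⟩
  have htK : t * (M + ε) ≤ δ / 2 := by
    have := htlam.trans (min_le_right _ _)
    rw [le_div_iff₀ (by positivity)] at this
    linarith
  exact (hhull_sub hv).2 x hx t ⟨ht₀, htlam.trans (min_le_left _ _)⟩ (by linarith)

/-- The convex hull of a uniform tangent set (in the strong λ-uniform sense) is again a
uniform tangent set in the same strong sense. -/
theorem convexHull_strong_uts
    {X : Type*} [NormedAddCommGroup X] [NormedSpace ℝ X] [CompleteSpace X]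
    (S : Set X) (hS : IsClosed S) (x₀ : X) (hx₀ : x₀ ∈ S)
    (D : Set X) (hD : Bornology.IsBounded D)
    (h : ∀ ε > (0:ℝ), ∃ δ > (0:ℝ), ∃ lam > (0:ℝ), ∀ v ∈ D, ∀ x ∈ S, ‖x - x₀‖ ≤ δ →
      ∀ t ∈ Set.Icc (0:ℝ) lam, ∃ b : X, ‖b‖ ≤ 1 ∧ x + t • (v + ε • b) ∈ S) :
    ∀ ε > (0:ℝ), ∃ δ > (0:ℝ), ∃ lam > (0:ℝ), ∀ v ∈ convexHull ℝ D, ∀ x ∈ S,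
      ‖x - x₀‖ ≤ δ → ∀ t ∈ Set.Icc (0:ℝ) lam,
        ∃ b : X, ‖b‖ ≤ 1 ∧ x + t • (v + ε • b) ∈ S :=
  convexHull_strong_uts_general S x₀ D hD h
end
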